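/- For every r > 0 there exists a constant c > 0 (depending only on r) such that for every point p of the upper half-plane and every L ≥ 1 there exists a finite set S of points, contained in the annulus B_H(p, L) \ B_H(p, L/2), whose points are pairwise at hyperbolic distance greater than 2r, and whose cardinality satisfies #S ≥ c · μ(B_H(p, L)). (The packing lower bound (equation (Nbig)) in the proof of Theorem 1.1.) -/

import Mathlib

/-!
The hyperbolic ball `B(p, L)` lies above the parabola `(x - p.re)² + p.im² = eᴸ p.im y`, and
integrating `dy / y²` over the region above it gives `μ(B(p, L)) ≤ π eᴸ`. On the horocycle at
height `y = 3 p.im / (2 eᴸ)`, every point within horizontal distance `p.im / 2` of `p` lies in the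
annulus, and two such points at horizontal distance more than `2 y sinh r` are more than `2r`
apart; spacing points `4 y sinh r` apart along this segment yields about `eᴸ / (6 sinh r)` of them.
-/

open UpperHalfPlane MeasureTheory

/-- The hyperbolic area of a subset of the upper half-plane: the measure with density
`1 / y²` with respect to two-dimensional Lebesgue measure, applied to the image of the
set under the coordinate chart `z ↦ (Re z, Im z)`. -/
noncomputable def hypArea (A : Set UpperHalfPlane) : ENNReal :=
  (volume.withDensity fun p : ℝ × ℝ => ENNReal.ofReal (1 / p.2 ^ 2))
    ((fun z : UpperHalfPlane => (z.re, z.im)) '' A)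

open Real Set

lemma lintegral_Ici_one_div_sq {b : ℝ} (hb : 0 < b) :
    ∫⁻ y in Ici b, ENNReal.ofReal (1 / y ^ 2) = ENNReal.ofReal (1 / b) := by
  have hrpow : EqOn (fun y : ℝ => y ^ (-2 : ℝ)) (fun y => 1 / y ^ 2) (Ioi b) := fun y hy => by
    simp [rpow_neg (hb.trans hy).le]
  have hint : IntegrableOn (fun y : ℝ => 1 / y ^ 2) (Ioi b) :=
    (integrableOn_Ioi_rpow_of_lt (by norm_num) hb).congr_fun hrpow measurableSet_Ioi
  rw [← setLIntegral_congr Ioi_ae_eq_Ici, ← ofReal_integral_eq_lintegral_ofReal hint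
    (.of_forall fun y => by positivity), ← setIntegral_congr_fun measurableSet_Ioi hrpow,
    integral_Ioi_rpow_of_lt (by norm_num) hb]
  norm_num [rpow_neg_one]

lemma withDensity_one_div_sq_setOf_le_snd {f : ℝ → ℝ} (hf : Measurable f) (hf_pos : ∀ x, 0 < f x) :
    (volume.withDensity fun q : ℝ × ℝ => ENNReal.ofReal (1 / q.2 ^ 2)) {q | f q.1 ≤ q.2}
      = ∫⁻ x, ENNReal.ofReal (1 / f x) := by
  have hE : MeasurableSet {q : ℝ × ℝ | f q.1 ≤ q.2} :=
    measurableSet_le (hf.comp measurable_fst) measurable_snd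
  have hdens : Measurable fun q : ℝ × ℝ => ENNReal.ofReal (1 / q.2 ^ 2) := by fun_prop
  rw [withDensity_apply _ hE, ← lintegral_indicator hE, Measure.volume_eq_prod,
    lintegral_prod _ (hdens.indicator hE).aemeasurable]
  refine lintegral_congr fun x => ?_
  rw [← lintegral_Ici_one_div_sq (hf_pos x), ← lintegral_indicator measurableSet_Ici]
  rfl

lemma lintegral_inv_sq_add_sq {m : ℝ} (hm : 0 < m) (x₀ : ℝ) :
    ∫⁻ x, ENNReal.ofReal ((x - x₀) ^ 2 + m ^ 2)⁻¹ = ENNReal.ofReal (π / m) := by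
  have hrescale : ∀ x : ℝ, ((x - x₀) ^ 2 + m ^ 2)⁻¹ = (m ^ 2)⁻¹ * (1 + ((x - x₀) / m) ^ 2)⁻¹ :=
    fun x => by field_simp; ring
  have hint : Integrable fun x : ℝ => ((x - x₀) ^ 2 + m ^ 2)⁻¹ := by
    simp_rw [hrescale]
    exact ((integrable_inv_one_add_sq.comp_div hm.ne').comp_sub_right x₀).const_mul _
  rw [← ofReal_integral_eq_lintegral_ofReal hint (.of_forall fun x => by positivity)]
  simp_rw [hrescale]
  rw [integral_const_mul, integral_sub_right_eq_self (fun x => (1 + (x / m) ^ 2)⁻¹),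
    Measure.integral_comp_div (fun x => (1 + x ^ 2)⁻¹), integral_univ_inv_one_add_sq,
    abs_of_pos hm, smul_eq_mul]
  congr 1
  field_simp

namespace UpperHalfPlane

lemma cosh_dist_eq_re_im (z w : ℍ) :
    cosh (dist z w) = 1 + ((z.re - w.re) ^ 2 + (z.im - w.im) ^ 2) / (2 * z.im * w.im) := by
  rw [cosh_dist, Complex.dist_eq_re_im, sq_sqrt (by positivity)]
  rfl

lemma dist_le_iff_re_im {z w : ℍ} {L : ℝ} (hL : 0 ≤ L) :
    dist z w ≤ L ↔
      (z.re - w.re) ^ 2 + (z.im - w.im) ^ 2 ≤ 2 * z.im * w.im * (cosh L - 1) := by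
  have hzw : 0 < 2 * z.im * w.im := by have := z.im_pos; have := w.im_pos; positivity
  rw [← abs_of_nonneg dist_nonneg, ← abs_of_nonneg hL, ← cosh_le_cosh, cosh_dist_eq_re_im,
    ← le_sub_iff_add_le', div_le_iff₀ hzw, mul_comm, abs_of_nonneg hL]

lemma lt_dist_of_im_eq {z w : ℍ} {r : ℝ} (him : z.im = w.im)
    (hre : 2 * z.im * sinh r < |z.re - w.re|) : 2 * r < dist z w := by
  have hsinh : sinh r < sinh (dist z w / 2) := by
    rw [sinh_half_dist, ← him, sqrt_mul_self z.im_pos.le, lt_div_iff₀ (by linarith [z.im_pos])]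
    calc sinh r * (2 * z.im) < |z.re - w.re| := by linarith
      _ = |((z : ℂ) - w).re| := rfl
      _ ≤ dist (z : ℂ) w := (Complex.abs_re_le_norm _).trans_eq (dist_eq_norm _ _).symm
  linarith [sinh_lt_sinh.1 hsinh]

lemma re_sub_sq_add_im_sq_le_of_mem_closedBall {p w : ℍ} {L : ℝ} (hw : w ∈ Metric.closedBall p L) :
    (w.re - p.re) ^ 2 + p.im ^ 2 ≤ exp L * p.im * w.im := by
  have hd : dist w p ≤ L := hw
  have hcosh := (dist_le_iff_re_im (dist_nonneg.trans hd)).1 hd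
  have hlow : p.im / exp L ≤ w.im :=
    (div_le_div_of_nonneg_left p.im_pos.le (exp_pos _) (exp_le_exp.2 hd)).trans
      (by simpa [dist_comm] using im_div_exp_dist_le p w)
  have hm := p.im_pos
  have hT := exp_pos L
  rw [cosh_eq, exp_neg] at hcosh
  rw [div_eq_mul_inv] at hlow
  nlinarith [mul_nonneg w.im_pos.le (sub_nonneg.2 hlow)]

lemma exists_separated_finset_im_eq {y : ℝ} (hy : 0 < y) (x₀ : ℝ) {ℓ : ℝ} (hℓ : 0 ≤ ℓ)
    {r : ℝ} (hr : 0 < r) :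
    ∃ S : Finset ℍ, (∀ q ∈ S, q.im = y ∧ q.re ∈ Icc x₀ (x₀ + ℓ)) ∧
      (∀ q ∈ S, ∀ q' ∈ S, q ≠ q' → 2 * r < dist q q') ∧ ℓ / (4 * y * sinh r) < S.card := by
  classical
  set δ := 4 * y * sinh r
  have hδ : 0 < δ := by have := sinh_pos_iff.2 hr; positivity
  let q : ℕ → ℍ := fun k => ⟨⟨x₀ + k * δ, y⟩, hy⟩
  have hq_re (k : ℕ) : (q k).re = x₀ + k * δ := rfl
  have hq_im (k : ℕ) : (q k).im = y := rfl
  have hq_inj : Function.Injective q := fun j k hjk => by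
    have := congrArg UpperHalfPlane.re hjk
    rw [hq_re, hq_re] at this
    exact_mod_cast mul_right_cancel₀ hδ.ne' (add_left_cancel this)
  set N := ⌊ℓ / δ⌋₊ + 1
  refine ⟨(Finset.range N).image q, ?_, ?_, ?_⟩
  · simp only [Finset.mem_image, Finset.mem_range]
    rintro _ ⟨k, hk, rfl⟩
    refine ⟨rfl, by rw [hq_re]; exact le_add_of_nonneg_right (by positivity), ?_⟩
    rw [hq_re, add_le_add_iff_left, ← le_div_iff₀ hδ]
    exact (Nat.cast_le.2 (Nat.lt_succ_iff.1 hk)).trans (Nat.floor_le (by positivity))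
  · simp only [Finset.mem_image]
    rintro _ ⟨j, -, rfl⟩ _ ⟨k, -, rfl⟩ hne
    have hjk : (1 : ℝ) ≤ |(j : ℝ) - k| := by
      have : j ≠ k := fun h => hne (h ▸ rfl)
      exact_mod_cast Int.one_le_abs (sub_ne_zero.2 (Int.natCast_inj.not.2 this))
    refine lt_dist_of_im_eq rfl ?_
    rw [hq_re, hq_re, hq_im, add_sub_add_left_eq_sub, ← sub_mul, abs_mul, abs_of_pos hδ]
    have := sinh_pos_iff.2 hr
    nlinarith
  · rw [Finset.card_image_of_injective _ hq_inj, Finset.card_range, Nat.cast_add_one]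
    exact Nat.lt_floor_add_one _

lemma mem_closedBall_diff_of_im_eq {p z : ℍ} {L : ℝ} (hL : 1 ≤ L)
    (him : z.im = 3 * p.im / (2 * exp L)) (hre : |z.re - p.re| ≤ p.im / 2) :
    z ∈ Metric.closedBall p L \ Metric.closedBall p (L / 2) := by
  have hm := p.im_pos
  have hT := exp_pos L
  have hT2 : 2 ≤ exp L := by linarith [add_one_le_exp L]
  refine ⟨(dist_le_iff_re_im (by linarith)).2 ?_, fun hz => ?_⟩
  · rw [him, cosh_eq, exp_neg]
    have : (z.re - p.re) ^ 2 ≤ (p.im / 2) ^ 2 := sq_le_sq' (abs_le.1 hre).1 (abs_le.1 hre).2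
    field_simp
    nlinarith
  · have hd : dist z p ≤ L / 2 := hz
    have h := im_le_im_mul_exp_dist p z
    rw [him, dist_comm, div_mul_eq_mul_div, le_div_iff₀ (by positivity),
      show L = L / 2 + L / 2 by ring, exp_add] at h
    have h12 : 3 / 2 < exp (1 / 2) := by linarith [add_one_lt_exp (x := 1 / 2) (by norm_num)]
    have hE : exp (1 / 2) ≤ exp (L / 2) := exp_le_exp.2 (by linarith)
    have hD : exp (dist z p) ≤ exp (L / 2) := exp_le_exp.2 hd
    have h3 : p.im * exp (L / 2) * (2 * exp (L / 2)) ≤ p.im * exp (L / 2) * 3 := by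
      nlinarith [mul_le_mul_of_nonneg_left hD (by positivity : (0 : ℝ) ≤ 3 * p.im)]
    linarith [le_of_mul_le_mul_left h3 (by positivity)]

end UpperHalfPlane

lemma hypArea_closedBall_le (p : ℍ) (L : ℝ) :
    hypArea (Metric.closedBall p L) ≤ ENNReal.ofReal (π * exp L) := by
  have hm := p.im_pos
  have hT := exp_pos L
  set f : ℝ → ℝ := fun x => ((x - p.re) ^ 2 + p.im ^ 2) / (exp L * p.im)
  have hsub : (fun z : ℍ => (z.re, z.im)) '' Metric.closedBall p L ⊆ {q | f q.1 ≤ q.2} := by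
    rintro _ ⟨w, hw, rfl⟩
    exact (div_le_iff₀' (by positivity)).2 (re_sub_sq_add_im_sq_le_of_mem_closedBall hw)
  calc hypArea (Metric.closedBall p L) ≤ _ := measure_mono hsub
    _ = ∫⁻ x, ENNReal.ofReal (exp L * p.im) * ENNReal.ofReal ((x - p.re) ^ 2 + p.im ^ 2)⁻¹ := by
      rw [withDensity_one_div_sq_setOf_le_snd (by fun_prop) fun x => by positivity]
      refine lintegral_congr fun x => ?_
      rw [← ENNReal.ofReal_mul (by positivity), one_div_div, div_eq_mul_inv]
    _ = ENNReal.ofReal (π * exp L) := by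
      rw [lintegral_const_mul _ (by fun_prop), lintegral_inv_sq_add_sq hm,
        ← ENNReal.ofReal_mul (by positivity)]
      congr 1
      field_simp

/-- The packing lower bound (equation (Nbig)) in the proof of Theorem 1.1: for every
`r > 0` there is `c > 0` (depending only on `r`) such that for every point `p` and every
`L ≥ 1` there is a finite set of points of the annulus `B_H(p, L) \ B_H(p, L/2)`, pairwise
at hyperbolic distance greater than `2r`, of cardinality at least `c · μ(B_H(p, L))`. -/
theorem annulus_packing_lower_bound (r : ℝ) (hr : 0 < r) :
    ∃ c : ℝ, 0 < c ∧ ∀ (p : UpperHalfPlane) (L : ℝ), 1 ≤ L →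
      ∃ S : Finset UpperHalfPlane,
        (∀ q ∈ S, q ∈ Metric.closedBall p L \ Metric.closedBall p (L / 2)) ∧
        (∀ q ∈ S, ∀ q' ∈ S, q ≠ q' → 2 * r < dist q q') ∧
        ENNReal.ofReal c * hypArea (Metric.closedBall p L) ≤ (S.card : ENNReal) := by
  have hs : 0 < sinh r := sinh_pos_iff.2 hr
  refine ⟨(6 * π * sinh r)⁻¹, by positivity, fun p L hL => ?_⟩
  have hm := p.im_pos
  have hT := exp_pos L
  obtain ⟨S, hS_mem, hS_sep, hS_card⟩ :=
    exists_separated_finset_im_eq (y := 3 * p.im / (2 * exp L)) (by positivity)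
      (p.re - p.im / 2) hm.le hr
  refine ⟨S, fun q hq => ?_, hS_sep, ?_⟩
  · obtain ⟨hq_im, hq_re_ge, hq_re_le⟩ := hS_mem q hq
    exact mem_closedBall_diff_of_im_eq hL hq_im (abs_sub_le_iff.2 ⟨by linarith, by linarith⟩)
  calc ENNReal.ofReal (6 * π * sinh r)⁻¹ * hypArea (Metric.closedBall p L)
      ≤ ENNReal.ofReal (6 * π * sinh r)⁻¹ * ENNReal.ofReal (π * exp L) := by
        gcongr; exact hypArea_closedBall_le p L
    _ = ENNReal.ofReal (p.im / (4 * (3 * p.im / (2 * exp L)) * sinh r)) := by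
        rw [← ENNReal.ofReal_mul (by positivity)]
        congr 1
        field_simp
        norm_num
    _ ≤ S.card := by
        rw [← ENNReal.ofReal_natCast]
        exact ENNReal.ofReal_le_ofReal hS_card.le
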